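/- arXiv:0806.0799 — 14 statements merged into one kernel-verified Lean document; each statement's English description precedes it below -/
import Mathlib

section
/- Let L be the Bell rule operator. Then for every natural number n ≥ 1 and every polynomial p ∈ ℝ[X] with zero constant coefficient, L^n(X·p) = Σ_{k=0}^{n-1} C(n-1,k) · X·L^{k+1}(p) + L^{n-1}(X·p). (In operator form on the subspace xK[x]: L^n∘𝐱 = Σ_{k=0}^{n-1} C(n-1,k) 𝐱∘L^{k+1} + L^{n-1}∘𝐱.) -/
/-!
On polynomials without constant term the Bell rule operator satisfies `L (X * p) = X * L p + X * p`,
i.e. `L ∘ 𝐱 = 𝐱 ∘ (L + 1)`. Since `L` preserves that subspace, this iterates to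
`L ^ m ∘ 𝐱 = 𝐱 ∘ (L + 1) ^ m = ∑ C(m, k) 𝐱 ∘ L ^ k`, and the theorem is this identity for
`m = n - 1`, applied to `L (X * p) = X * L p + X * p`.
-/

open Polynomial

theorem Module.End.add_one_pow_apply {R M : Type*} [CommSemiring R] [AddCommMonoid M]
    [Module R M] (L : Module.End R M) (m : ℕ) (v : M) :
    ((L + 1) ^ m) v = ∑ k ∈ Finset.range (m + 1), m.choose k • (L ^ k) v := by
  rw [(Commute.one_right L).add_pow, LinearMap.sum_apply]
  refine Finset.sum_congr rfl fun k _ => ?_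
  rw [one_pow, mul_one, ← nsmul_eq_mul', LinearMap.smul_apply]

namespace BellRuleOperator

variable {R : Type*} [CommRing R] {L : Module.End R R[X]}
  (hL : ∀ k : ℕ, 1 ≤ k → L (X ^ k) = ((k : R) - 1) • X ^ k + X ^ (k + 1))
include hL

theorem coeff_zero_apply_X_mul (q : R[X]) : (L (X * q)).coeff 0 = 0 := by
  induction q using Polynomial.induction_on' with
  | add p q hp hq => rw [mul_add, map_add, coeff_add, hp, hq, add_zero]
  | monomial k a =>
    rw [← smul_X_eq_monomial, mul_smul_comm, map_smul, ← pow_succ', hL (k + 1) le_add_self]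
    simp [coeff_X_pow]

theorem apply_X_mul_X_mul (q : R[X]) : L (X * (X * q)) = X * L (X * q) + X * (X * q) := by
  induction q using Polynomial.induction_on' with
  | add p q hp hq => simp only [mul_add, map_add, hp, hq]; ring
  | monomial k a =>
    simp only [← smul_X_eq_monomial, mul_smul_comm, map_smul, ← pow_succ']
    rw [hL (k + 1) le_add_self, hL (k + 2) le_add_self]
    simp only [mul_add, mul_smul_comm, ← pow_succ']
    push_cast
    module

theorem coeff_zero_apply {p : R[X]} (hp : p.coeff 0 = 0) : (L p).coeff 0 = 0 := by
  obtain ⟨q, rfl⟩ := X_dvd_iff.2 hp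
  exact coeff_zero_apply_X_mul hL q

theorem apply_X_mul {p : R[X]} (hp : p.coeff 0 = 0) : L (X * p) = X * L p + X * p := by
  obtain ⟨q, rfl⟩ := X_dvd_iff.2 hp
  exact apply_X_mul_X_mul hL q

theorem pow_apply_X_mul {p : R[X]} (hp : p.coeff 0 = 0) (m : ℕ) :
    (L ^ m) (X * p) = X * ((L + 1) ^ m) p := by
  induction m generalizing p with
  | zero => rfl
  | succ m ih =>
    have hLp : (L p + p).coeff 0 = 0 := by rw [coeff_add, coeff_zero_apply hL hp, hp, add_zero]
    rw [pow_succ, Module.End.mul_apply, apply_X_mul hL hp, ← mul_add, ih hLp, pow_succ,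
      Module.End.mul_apply, LinearMap.add_apply, Module.End.one_apply]

end BellRuleOperator

open BellRuleOperator in
theorem bell_operator_power_mul_X_general
    (L : Module.End ℝ (Polynomial ℝ))
    (hL : ∀ k : ℕ, 1 ≤ k → L (X ^ k) = ((k : ℝ) - 1) • X ^ k + X ^ (k + 1))
    (n : ℕ) (p : Polynomial ℝ) (hp : p.coeff 0 = 0) :
    (L ^ n) (X * p) =
      (∑ k ∈ Finset.range n, Nat.choose (n - 1) k • (X * (L ^ (k + 1)) p)) +
        (L ^ (n - 1)) (X * p) := by
  cases n with
  | zero => simp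
  | succ m =>
    rw [Nat.add_sub_cancel, pow_succ, Module.End.mul_apply, apply_X_mul hL hp, map_add,
      pow_apply_X_mul hL (coeff_zero_apply hL hp), Module.End.add_one_pow_apply, Finset.mul_sum]
    simp only [mul_smul_comm, ← Module.End.mul_apply, ← pow_succ]

/-- For the Bell rule operator `L` (the rule operator of
`(k) ⇝ (k)^{k-1}(k+1)`, i.e. `L(X^k) = (k-1)·X^k + X^(k+1)` for `k ≥ 1`),
one has `L^n ∘ 𝐱 = Σ_{k=0}^{n-1} C(n-1,k) 𝐱 ∘ L^{k+1} + L^{n-1} ∘ 𝐱` on the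
subspace of polynomials with zero constant coefficient. -/
theorem bell_operator_power_mul_X
    (L : Module.End ℝ (Polynomial ℝ))
    (hL : ∀ k : ℕ, 1 ≤ k → L (X ^ k) = ((k : ℝ) - 1) • X ^ k + X ^ (k + 1))
    (n : ℕ) (hn : 1 ≤ n) (p : Polynomial ℝ) (hp : p.coeff 0 = 0) :
    (L ^ n) (X * p) =
      (∑ k ∈ Finset.range n, Nat.choose (n - 1) k • (X * (L ^ (k + 1)) p)) +
        (L ^ (n - 1)) (X * p) :=
  bell_operator_power_mul_X_general L hL n p hp
end

section
/- Let L be the Catalan rule operator. Then the Pincherle derivative of L on the subspace of polynomials with zero constant coefficient equals the operator c₂: explicitly, for every polynomial p ∈ ℝ[X] with zero constant coefficient, L(X·p) − X·L(p) = (p evaluated at 1) · X². -/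
/-!
On `X ^ n` with `n ≥ 1` the Pincherle derivative `p ↦ L (X * p) - X * L p` telescopes to `X ^ 2`,
because `X * (X ^ 2 + ⋯ + X ^ (n + 1)) = X ^ 3 + ⋯ + X ^ (n + 2)`. A polynomial without constant
term is `X * q`, and both sides are linear in `q`, so it suffices to compare them on monomials.
-/

open Polynomial Finset

theorem sum_Icc_pow_succ_top {R : Type*} [Semiring R] (x : R) {a b : ℕ} (hab : a ≤ b) :
    ∑ i ∈ Icc a (b + 1), x ^ i = x ^ a + x * ∑ i ∈ Icc a b, x ^ i := by
  induction b, hab using Nat.le_induction with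
  | base => simp [sum_Icc_succ_top, pow_succ']
  | succ b hab ih =>
    rw [sum_Icc_succ_top (by omega : a ≤ b + 1)] at ih
    rw [sum_Icc_succ_top (by omega : a ≤ b + 1 + 1), sum_Icc_succ_top (by omega : a ≤ b + 1),
      mul_add, ← add_assoc, ← ih, ← pow_succ']

section CatalanOperator

variable {R : Type*} [CommRing R] (L : Module.End R R[X])
  (hL : ∀ k : ℕ, 1 ≤ k → L (X ^ k) = ∑ i ∈ Icc 2 (k + 1), X ^ i)
include hL

theorem catalan_pincherle_X_pow {n : ℕ} (hn : 1 ≤ n) :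
    L (X * X ^ n) - X * L (X ^ n) = X ^ 2 := by
  rw [← pow_succ', hL n hn, hL (n + 1) (by omega), sum_Icc_pow_succ_top X (by omega)]
  ring

theorem catalan_pincherle_X_mul (q : R[X]) :
    L (X * (X * q)) - X * L (X * q) = q.eval 1 • X ^ 2 := by
  induction q using Polynomial.induction_on' with
  | add p q hp hq =>
    simp only [mul_add, map_add, eval_add, add_smul, ← hp, ← hq]
    ring
  | monomial n a =>
    have h := catalan_pincherle_X_pow L hL (Nat.le_add_left 1 n)
    rw [← C_mul_X_pow_eq_monomial, ← smul_eq_C_mul]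
    simp only [mul_smul_comm, map_smul, eval_smul, eval_pow, eval_X, one_pow, smul_eq_mul,
      mul_one, ← smul_sub]
    rw [← pow_succ', h]

end CatalanOperator

/-- For the Catalan rule operator `L` (the rule operator of
`(k) ⇝ (2)(3)⋯(k)(k+1)`, i.e. `L(X^k) = Σ_{i=2}^{k+1} X^i` for `k ≥ 1`),
the Pincherle derivative `L𝐱 - 𝐱L` on the subspace of polynomials with zero
constant coefficient equals the operator `c₂ : p ↦ p(1)·X²`. -/
theorem catalan_operator_pincherle_derivative
    (L : Module.End ℝ (Polynomial ℝ))
    (hL : ∀ k : ℕ, 1 ≤ k → L (X ^ k) = ∑ i ∈ Finset.Icc 2 (k + 1), X ^ i)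
    (p : Polynomial ℝ) (hp : p.coeff 0 = 0) :
    L (X * p) - X * L p = p.eval 1 • X ^ 2 := by
  obtain ⟨q, rfl⟩ := X_dvd_iff.mpr hp
  rw [catalan_pincherle_X_mul L hL q, eval_mul, eval_X, one_mul]
end

section
/- Let L be the Catalan rule operator. Then for every natural number n and every polynomial p ∈ ℝ[X] with zero constant coefficient, L^n(X·p) = X·L^n(p) + Σ_{i=0}^{n-1} ((L^{n-1-i}(p)) evaluated at 1) · L^i(X²). (In operator form on xK[x]: L^n∘𝐱 = 𝐱∘L^n + Σ_{i=0}^{n-1} L^i ∘ c₂ ∘ L^{n-1-i}.) -/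
open Polynomial Finset

/-! Since `L (X ^ (k + 2)) = X * L (X ^ (k + 1)) + X ^ 2`, linearity gives the commutation
rule `L (X * q) = X * L q + q(1) • X ^ 2` for every `q` divisible by `X`, and `L` preserves
divisibility by `X`. Iterating the rule `n` times, the correction term `p(1) • X ^ 2` created
at each step is then carried along by the remaining powers of `L`. -/

theorem mul_sum_Icc_two_pow_add_sq {R : Type*} [CommSemiring R] (x : R) (k : ℕ) :
    x * ∑ i ∈ Icc 2 (k + 1), x ^ i + x ^ 2 = ∑ i ∈ Icc 2 (k + 2), x ^ i := by
  induction k with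
  | zero => simp
  | succ k ih =>
    rw [sum_Icc_succ_top (b := k + 1) (by omega), sum_Icc_succ_top (b := k + 2) (by omega),
      mul_add, add_right_comm, ih]
    ring

/-- The rule operator of `(k) ⇝ (2)(3)⋯(k+1)`; its value on `1` is left free. -/
def IsCatalanOperator {R : Type*} [CommSemiring R] (L : Module.End R R[X]) : Prop :=
  ∀ k : ℕ, 1 ≤ k → L (X ^ k) = ∑ i ∈ Icc 2 (k + 1), X ^ i

namespace IsCatalanOperator

variable {R : Type*} [CommSemiring R] {L : Module.End R R[X]}

theorem map_X (hL : IsCatalanOperator L) : L X = X ^ 2 := by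
  simpa using hL 1 le_rfl

theorem map_X_pow_add_two (hL : IsCatalanOperator L) (k : ℕ) :
    L (X ^ (k + 2)) = X * L (X ^ (k + 1)) + X ^ 2 := by
  rw [hL _ (by omega), hL _ (by omega)]
  exact (mul_sum_Icc_two_pow_add_sq X (k + 1)).symm

theorem map_X_mul_X_mul (hL : IsCatalanOperator L) (r : R[X]) :
    L (X * (X * r)) = X * L (X * r) + r.eval 1 • X ^ 2 := by
  induction r using Polynomial.induction_on' with
  | add p q hp hq =>
    simp only [mul_add, map_add, eval_add, add_smul, hp, hq]
    abel
  | monomial k a =>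
    have h1 : X * monomial k a = a • (X : R[X]) ^ (k + 1) := by
      rw [← C_mul_X_pow_eq_monomial, smul_eq_C_mul]; ring
    have h2 : X * (X * monomial k a) = a • (X : R[X]) ^ (k + 2) := by
      rw [h1, mul_smul_comm]; ring_nf
    rw [h2, h1, map_smul, map_smul, map_X_pow_add_two hL]
    simp [smul_add]

theorem map_X_mul (hL : IsCatalanOperator L) {q : R[X]} (hq : X ∣ q) :
    L (X * q) = X * L q + q.eval 1 • X ^ 2 := by
  obtain ⟨r, rfl⟩ := hq
  simp [map_X_mul_X_mul hL]

theorem X_dvd_map (hL : IsCatalanOperator L) {q : R[X]} (hq : X ∣ q) : X ∣ L q := by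
  obtain ⟨r, rfl⟩ := hq
  rw [← X_mul_divX_add r, mul_add, map_add, map_X_mul_X_mul hL, X_mul_C, ← smul_eq_C_mul,
    map_smul, map_X hL, add_assoc, ← add_smul, smul_eq_C_mul]
  exact dvd_add (dvd_mul_right _ _) (dvd_mul_of_dvd_right (dvd_pow_self X two_ne_zero) _)

end IsCatalanOperator

/-- For the Catalan rule operator `L`, one has
`L^n ∘ 𝐱 = 𝐱 ∘ L^n + Σ_{i=0}^{n-1} L^i ∘ c₂ ∘ L^{n-1-i}` on the subspace of
polynomials with zero constant coefficient, where `c₂ : p ↦ p(1)·X²`. -/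
theorem catalan_operator_power_mul_X
    (L : Module.End ℝ (Polynomial ℝ))
    (hL : ∀ k : ℕ, 1 ≤ k → L (X ^ k) = ∑ i ∈ Finset.Icc 2 (k + 1), X ^ i)
    (n : ℕ) (p : Polynomial ℝ) (hp : p.coeff 0 = 0) :
    (L ^ n) (X * p) =
      X * (L ^ n) p +
        ∑ i ∈ Finset.range n, ((L ^ (n - 1 - i)) p).eval 1 • (L ^ i) (X ^ 2) := by
  have hCat : IsCatalanOperator L := hL
  induction n generalizing p with
  | zero => simp
  | succ n ih =>
    have hpX : X ∣ p := X_dvd_iff.mpr hp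
    have hpow : ∀ m q, (L ^ (m + 1)) q = (L ^ m) (L q) := fun m q => by
      rw [pow_succ, Module.End.mul_apply]
    rw [hpow, hCat.map_X_mul hpX, map_add, map_smul, ih (L p) (X_dvd_iff.mp (hCat.X_dvd_map hpX)),
      sum_range_succ, hpow, Nat.add_sub_cancel, Nat.sub_self, pow_zero, Module.End.one_apply,
      add_assoc]
    congr 2
    refine sum_congr rfl fun i hi => ?_
    rw [show n - i = n - 1 - i + 1 by have := mem_range.mp hi; omega, hpow]
end

section
/- Let L be the Catalan rule operator and for natural numbers n and b ≥ 1 set f_n^{(b)} = (L^n(X^b)) evaluated at X = 1. Then for every b ≥ 1 and every n, f_n^{(b+1)} = f_n^{(b)} + Σ_{i=0}^{n-1} f_i^{(2)} · f_{n-1-i}^{(b)}. -/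
/-!
On the span of positive powers (`L 1` is not prescribed) the rule operator satisfies
`L (X * p) = p(1) • X² + X * L p`, because `X² + ⋯ + X^(k+2) = X² + X * (X² + ⋯ + X^(k+1))`,
and it maps this span into itself. Iterating this twisted Leibniz rule gives
`Lⁿ (X * p) = X * Lⁿ p + ∑_{i<n} (L^(n-1-i) p)(1) • Lⁱ (X²)`, and evaluating at `1` with
`p = X^b` is the recursion.
-/

open Polynomial

namespace Polynomial

variable {R : Type*} [CommSemiring R]

variable (R) in
noncomputable def positivePowersSpan : Submodule R R[X] :=
  Submodule.span R (Set.range fun k : ℕ => (X : R[X]) ^ (k + 1))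

theorem X_pow_mem_positivePowersSpan {k : ℕ} (hk : 1 ≤ k) :
    (X : R[X]) ^ k ∈ positivePowersSpan R := by
  obtain ⟨j, rfl⟩ := Nat.exists_eq_add_of_le' hk
  exact Submodule.subset_span ⟨j, rfl⟩

def IsCatalanRuleOperator (L : Module.End R R[X]) : Prop :=
  ∀ k : ℕ, 1 ≤ k → L (X ^ k) = ∑ i ∈ Finset.Icc 2 (k + 1), X ^ i

namespace IsCatalanRuleOperator

variable {L : Module.End R R[X]}

theorem apply_X_pow_succ (hL : IsCatalanRuleOperator L) {k : ℕ} (hk : 1 ≤ k) :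
    L (X ^ (k + 1)) = X ^ 2 + X * L (X ^ k) := by
  have hIcc : ∀ m, Finset.Icc 2 (m + 1) = Finset.Ico 2 (2 + m) := fun m => by
    ext; simp only [Finset.mem_Icc, Finset.mem_Ico]; omega
  rw [hL _ (by omega), hL k hk, hIcc, hIcc, Finset.sum_Ico_eq_sum_range,
    Finset.sum_Ico_eq_sum_range, Nat.add_sub_cancel_left, Nat.add_sub_cancel_left,
    Finset.sum_range_succ', Finset.mul_sum, add_comm]
  simp only [add_zero, ← pow_succ', add_assoc]

theorem apply_mem_positivePowersSpan (hL : IsCatalanRuleOperator L) {p : R[X]}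
    (hp : p ∈ positivePowersSpan R) :
    L p ∈ positivePowersSpan R := by
  refine (Submodule.span_le (p := (positivePowersSpan R).comap L)).mpr ?_ hp
  rintro _ ⟨k, rfl⟩
  rw [SetLike.mem_coe, Submodule.mem_comap, hL _ (by omega)]
  exact Submodule.sum_mem _ fun i hi =>
    X_pow_mem_positivePowersSpan (by simp only [Finset.mem_Icc] at hi; omega)

theorem pow_apply_mem_positivePowersSpan (hL : IsCatalanRuleOperator L) {p : R[X]}
    (hp : p ∈ positivePowersSpan R) (n : ℕ) :
    (L ^ n) p ∈ positivePowersSpan R := by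
  induction n with
  | zero => exact hp
  | succ n ih => rw [pow_succ', Module.End.mul_apply]; exact hL.apply_mem_positivePowersSpan ih

theorem apply_X_mul (hL : IsCatalanRuleOperator L) {p : R[X]}
    (hp : p ∈ positivePowersSpan R) :
    L (X * p) = p.eval 1 • X ^ 2 + X * L p := by
  induction hp using Submodule.span_induction with
  | mem _ h =>
    obtain ⟨k, rfl⟩ := h
    rw [← pow_succ', hL.apply_X_pow_succ (by omega), eval_pow, eval_X, one_pow, one_smul]
  | zero => simp
  | add p q _ _ hp hq =>
    rw [mul_add, map_add, hp, hq, eval_add, add_smul, map_add, mul_add]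
    abel
  | smul c p _ hp =>
    rw [mul_smul_comm, map_smul, hp, eval_smul, smul_eq_mul, mul_smul, map_smul, mul_smul_comm,
      smul_add]

theorem pow_apply_X_mul (hL : IsCatalanRuleOperator L) {p : R[X]}
    (hp : p ∈ positivePowersSpan R) (n : ℕ) :
    (L ^ n) (X * p) =
      X * (L ^ n) p + ∑ i ∈ Finset.range n, ((L ^ (n - 1 - i)) p).eval 1 • (L ^ i) (X ^ 2) := by
  induction n with
  | zero => simp
  | succ n ih =>
    rw [pow_succ', Module.End.mul_apply, ih, map_add,
      hL.apply_X_mul (hL.pow_apply_mem_positivePowersSpan hp n), map_sum, Finset.sum_range_succ']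
    simp only [map_smul, ← Module.End.mul_apply, ← pow_succ', Nat.add_sub_cancel, Nat.sub_zero,
      pow_zero, Module.End.one_apply, Nat.sub_sub, Nat.add_comm 1]
    abel

end IsCatalanRuleOperator

end Polynomial

/-- For the Catalan rule operator `L` and the associated family of
sequences `f n b = [L^n(X^b)]_{X=1}`, one has, for `b ≥ 1` and every `n`,
`f_n^{(b+1)} = f_n^{(b)} + Σ_{i=0}^{n-1} f_i^{(2)} f_{n-1-i}^{(b)}`. -/
theorem catalan_sequence_recursion
    (L : Module.End ℝ (Polynomial ℝ))
    (hL : ∀ k : ℕ, 1 ≤ k → L (X ^ k) = ∑ i ∈ Finset.Icc 2 (k + 1), X ^ i)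
    (f : ℕ → ℕ → ℝ) (hf : ∀ n b, f n b = ((L ^ n) (X ^ b)).eval 1)
    (b : ℕ) (hb : 1 ≤ b) (n : ℕ) :
    f n (b + 1) = f n b + ∑ i ∈ Finset.range n, f i 2 * f (n - 1 - i) b := by
  rw [hf, pow_succ', IsCatalanRuleOperator.pow_apply_X_mul hL (X_pow_mem_positivePowersSpan hb),
    eval_add, eval_mul, eval_X, one_mul, eval_finsetSum, hf]
  congr 1
  refine Finset.sum_congr rfl fun i _ => ?_
  rw [eval_smul, smul_eq_mul, hf, hf, mul_comm]
end

section
/- Let L be the Catalan rule operator and for natural numbers n and b ≥ 1 set f_n^{(b)} = (L^n(X^b)) evaluated at X = 1. Then for every b ≥ 1, the ordinary generating function of (f_n^{(b)})_{n∈ℕ} is the b-th power of the generating function of the Catalan numbers: as formal power series over ℝ, Σ_{n≥0} f_n^{(b)} x^n = (Σ_{n≥0} Catalan(n) x^n)^b, where Catalan(n) is the n-th Catalan number. -/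
/-!
The Catalan series `C` satisfies `x C² = C - 1`, so evaluating at `C` turns the rule
`X^k ⇝ X² + ⋯ + X^{k+1}` into a geometric sum: `x · L(X^k)(C) = C^k - 1 = X^k(C) - X^k(1)`.
By linearity `x · (L p)(C) = p(C) - p(1)` for every `p ∈ X ℝ[X]`, a subspace preserved by `L`.
Hence `q n := (Lⁿ X^b)(C)` satisfies `q n = f n + x · q (n + 1)`, i.e. the `n`-th coefficient
of `q 0 = C^b` is `f n`.
-/

open Polynomial

theorem PowerSeries.X_mul_catalan_sq {R : Type*} [CommRing R] :
    X * (mk fun n => (catalan n : R)) ^ 2 = (mk fun n => (catalan n : R)) - 1 := by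
  have h := congrArg (map (Nat.castRingHom R)) catalanSeries_sq_mul_X_add_one
  have hmap : map (Nat.castRingHom R) catalanSeries = mk fun n => (catalan n : R) := by
    ext n; simp
  simp only [map_add, map_mul, map_pow, map_X, map_one, hmap] at h
  linear_combination h

theorem PowerSeries.eq_mk_of_eq_C_add_X_mul {R : Type*} [Semiring R] {q : ℕ → PowerSeries R}
    {a : ℕ → R} (h : ∀ m, q m = C (a m) + X * q (m + 1)) : q 0 = mk a := by
  suffices ∀ n m, coeff n (q m) = a (m + n) by ext n; simpa using this n 0
  intro n
  induction n with
  | zero => intro m; simp [h m]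
  | succ n ih =>
    intro m
    rw [h m, map_add, coeff_succ_X_mul, ih, coeff_C, if_neg n.succ_ne_zero, zero_add,
      add_right_comm, add_assoc]

theorem mul_sum_Icc_pow {A : Type*} [CommRing A] {x c : A} (hc : x * c ^ 2 = c - 1) (k : ℕ) :
    x * ∑ i ∈ Finset.Icc 2 (k + 1), c ^ i = c ^ k - 1 := by
  rw [← Finset.Ico_add_one_right_eq_Icc, Finset.sum_Ico_eq_sum_range,
    show k + 1 + 1 - 2 = k by omega]
  simp only [pow_add, ← Finset.mul_sum]
  rw [← mul_assoc, hc, mul_comm, geom_sum_mul]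

theorem Polynomial.linearMap_eq_of_X_dvd {R M : Type*} [CommSemiring R] [AddCommMonoid M]
    [Module R M] {φ ψ : R[X] →ₗ[R] M} (h : ∀ k, 1 ≤ k → φ (X ^ k) = ψ (X ^ k)) {p : R[X]}
    (hp : X ∣ p) : φ p = ψ p := by
  obtain ⟨q, rfl⟩ := hp
  induction q using Polynomial.induction_on' with
  | add p q hp hq => simp only [mul_add, map_add, hp, hq]
  | monomial n a =>
    rw [← C_mul_X_pow_eq_monomial, mul_left_comm, ← pow_succ', ← smul_eq_C_mul, map_smul,
      map_smul, h _ (Nat.le_add_left 1 n)]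

section CatalanRule

variable {R : Type*} [CommSemiring R] {L : Module.End R R[X]}

theorem X_dvd_apply_of_X_dvd
    (hL : ∀ k : ℕ, 1 ≤ k → L (X ^ k) = ∑ i ∈ Finset.Icc 2 (k + 1), X ^ i)
    {p : R[X]} (hp : X ∣ p) : X ∣ L p := by
  rw [X_dvd_iff]
  refine linearMap_eq_of_X_dvd (φ := (lcoeff R 0).comp L) (ψ := 0) (fun k hk => ?_) hp
  simp only [LinearMap.comp_apply, hL k hk, lcoeff_apply, finsetSum_coeff, coeff_X_pow,
    LinearMap.zero_apply]
  exact Finset.sum_eq_zero fun i hi => if_neg (by grind)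

theorem X_dvd_pow_apply_of_X_dvd
    (hL : ∀ k : ℕ, 1 ≤ k → L (X ^ k) = ∑ i ∈ Finset.Icc 2 (k + 1), X ^ i)
    {p : R[X]} (hp : X ∣ p) (n : ℕ) : X ∣ (L ^ n) p := by
  induction n with
  | zero => exact hp
  | succ n ih => rw [pow_succ', Module.End.mul_apply]; exact X_dvd_apply_of_X_dvd hL ih

theorem mul_aeval_apply {A : Type*} [CommRing A] [Algebra R A] {x c : A}
    (hc : x * c ^ 2 = c - 1)
    (hL : ∀ k : ℕ, 1 ≤ k → L (X ^ k) = ∑ i ∈ Finset.Icc 2 (k + 1), X ^ i)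
    {p : R[X]} (hp : X ∣ p) : x * aeval c (L p) = aeval c p - algebraMap R A (p.eval 1) := by
  refine linearMap_eq_of_X_dvd
    (φ := (LinearMap.mulLeft R x).comp ((aeval c).toLinearMap.comp L))
    (ψ := (aeval c).toLinearMap - (Algebra.linearMap R A).comp (leval 1)) (fun k hk => ?_) hp
  simp [hL k hk, ← Finset.mul_sum, mul_sum_Icc_pow hc]

end CatalanRule

/-- For the Catalan rule operator `L` and the associated family of
sequences `f n b = [L^n(X^b)]_{X=1}`, for every axiom `b ≥ 1` the ordinary
generating function of `(f_n^{(b)})_n` is the `b`-th power of the generating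
function of the Catalan numbers. -/
theorem catalan_sequence_generating_function
    (L : Module.End ℝ (Polynomial ℝ))
    (hL : ∀ k : ℕ, 1 ≤ k → L (X ^ k) = ∑ i ∈ Finset.Icc 2 (k + 1), X ^ i)
    (f : ℕ → ℕ → ℝ) (hf : ∀ n b, f n b = ((L ^ n) (X ^ b)).eval 1)
    (b : ℕ) (hb : 1 ≤ b) :
    PowerSeries.mk (fun n => f n b) =
      (PowerSeries.mk fun n => (catalan n : ℝ)) ^ b := by
  set c := PowerSeries.mk fun n => (catalan n : ℝ)
  have hstep : ∀ n, aeval c ((L ^ n) (X ^ b)) =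
      PowerSeries.C (f n b) + PowerSeries.X * aeval c ((L ^ (n + 1)) (X ^ b)) := by
    intro n
    rw [pow_succ', Module.End.mul_apply, mul_aeval_apply PowerSeries.X_mul_catalan_sq hL
      (X_dvd_pow_apply_of_X_dvd hL (dvd_pow_self X (by omega)) n), hf,
      PowerSeries.algebraMap_apply, Algebra.algebraMap_self_apply]
    ring
  simpa using (PowerSeries.eq_mk_of_eq_C_add_X_mul hstep).symm
end

section
/- Let L be the Motzkin rule operator. Then the Pincherle derivative of L on the subspace of polynomials with zero constant coefficient equals the operator c₁: explicitly, for every polynomial p ∈ ℝ[X] with zero constant coefficient, L(X·p) − X·L(p) = (p evaluated at 1) · X. -/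
open Polynomial Finset

/-! On monomials, `L (X ^ (n + 2)) - X * L (X ^ (n + 1))` telescopes to
`(X + ⋯ + X ^ (n + 1)) - (X ^ 2 + ⋯ + X ^ (n + 1)) = X`, the top powers cancelling. Writing
`p = X * q`, both sides of the identity are linear in `q` and `p(1) = q(1)`, so the monomial case
suffices. -/

theorem sum_Icc_one_pow_succ {α : Type*} [CommRing α] (x : α) (m : ℕ) :
    ∑ i ∈ Icc 1 (m + 1), x ^ i = x + x * ∑ i ∈ Icc 1 m, x ^ i := by
  induction m with
  | zero => simp
  | succ m ih =>
    rw [sum_Icc_succ_top (by omega : 1 ≤ m + 2)]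
    nth_rw 1 [ih]
    rw [sum_Icc_succ_top (by omega : 1 ≤ m + 1)]
    ring

section MotzkinOperator

variable {R : Type*} [CommRing R] {L : Module.End R R[X]}

theorem motzkin_apply_X_pow_succ (hL1 : L X = X ^ 2)
    (hL : ∀ k : ℕ, 2 ≤ k → L (X ^ k) = (∑ i ∈ Icc 1 (k - 1), X ^ i) + X ^ (k + 1)) (k : ℕ) :
    L (X ^ (k + 1)) = (∑ i ∈ Icc 1 k, X ^ i) + X ^ (k + 2) := by
  rcases k with _ | k
  · simp [hL1]
  · simpa using hL (k + 2) (by omega)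

theorem motzkin_pincherle_X_pow
    (hL : ∀ k : ℕ, L (X ^ (k + 1)) = (∑ i ∈ Icc 1 k, X ^ i) + X ^ (k + 2)) (n : ℕ) :
    L (X * X ^ (n + 1)) - X * L (X ^ (n + 1)) = X := by
  rw [← pow_succ', hL, hL, sum_Icc_one_pow_succ]
  ring

theorem motzkin_pincherle_X_mul
    (hL : ∀ k : ℕ, L (X ^ (k + 1)) = (∑ i ∈ Icc 1 k, X ^ i) + X ^ (k + 2)) (q : R[X]) :
    L (X * (X * q)) - X * L (X * q) = q.eval 1 • X := by
  induction q using Polynomial.induction_on' with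
  | add a b ha hb =>
    simp only [mul_add, map_add, eval_add, add_smul, ← ha, ← hb]
    ring
  | monomial n r =>
    rw [← smul_X_eq_monomial, mul_smul_comm, mul_smul_comm, ← pow_succ', map_smul, map_smul,
      mul_smul_comm, ← smul_sub, motzkin_pincherle_X_pow hL]
    simp

end MotzkinOperator

/-- For the Motzkin rule operator `L` (the rule operator of
`(k) ⇝ (1)(2)⋯(k-1)(k+1)`, i.e. `L(X) = X²` and
`L(X^k) = Σ_{i=1}^{k-1} X^i + X^(k+1)` for `k ≥ 2`), the Pincherle derivative
`L𝐱 - 𝐱L` on the subspace of polynomials with zero constant coefficient equals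
the operator `c₁ : p ↦ p(1)·X`. -/
theorem motzkin_operator_pincherle_derivative
    (L : Module.End ℝ (Polynomial ℝ))
    (hL1 : L X = X ^ 2)
    (hL : ∀ k : ℕ, 2 ≤ k →
      L (X ^ k) = (∑ i ∈ Finset.Icc 1 (k - 1), X ^ i) + X ^ (k + 1))
    (p : Polynomial ℝ) (hp : p.coeff 0 = 0) :
    L (X * p) - X * L p = p.eval 1 • X := by
  have hX_mul_divX : X * p.divX = p := by simpa [hp] using X_mul_divX_add p
  rw [← hX_mul_divX, motzkin_pincherle_X_mul (motzkin_apply_X_pow_succ hL1 hL)]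
  simp
end

section
/- Let L be the Motzkin rule operator. Then for every natural number n and every polynomial p ∈ ℝ[X] with zero constant coefficient, L^n(X·p) = X·L^n(p) + Σ_{i=0}^{n-1} ((L^{n-1-i}(p)) evaluated at 1) · L^i(X). (In operator form on xK[x]: L^n∘𝐱 = 𝐱∘L^n + Σ_{i=0}^{n-1} L^i ∘ c₁ ∘ L^{n-1-i}.) -/
/-!
On the polynomials divisible by `X`, the Motzkin operator satisfies the commutation rule
`L (X * p) = X * L p + p(1) • X`: on a monomial `X ^ (k + 1)` both sides equal
`X + ⋯ + X ^ (k + 1) + X ^ (k + 3)`. This subspace is `L`-invariant, so iterating the rule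
produces one correction term `L ^ i (c₁ (L ^ (n - 1 - i) p))` for each of the `n` applications
of `L`.
-/

open Polynomial

section Commutator

variable {R M : Type*} [Semiring R] [AddCommMonoid M] [Module R M]

theorem Module.End.pow_apply_of_apply_eq_add {L T : Module.End R M} {C : M → M} {S : Set M}
    (hS : Set.MapsTo L S S) (hLT : ∀ p ∈ S, L (T p) = T (L p) + C p) (n : ℕ) {p : M}
    (hp : p ∈ S) :
    (L ^ n) (T p) = T ((L ^ n) p) + ∑ i ∈ Finset.range n, (L ^ i) (C ((L ^ (n - 1 - i)) p)) := by
  induction n generalizing p with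
  | zero => simp
  | succ n ih =>
    have hpow (m : ℕ) (q : M) : (L ^ m) (L q) = (L ^ (m + 1)) q := by
      rw [pow_succ, Module.End.mul_apply]
    have hshift : ∀ i ∈ Finset.range n,
        (L ^ i) (C ((L ^ (n - 1 - i)) (L p))) = (L ^ i) (C ((L ^ (n + 1 - 1 - i)) p)) := by
      intro i hi
      rw [hpow, show n - 1 - i + 1 = n + 1 - 1 - i by grind]
    rw [← hpow, hLT p hp, map_add, ih (hS hp), hpow, Finset.sum_congr rfl hshift,
      Finset.sum_range_succ, Nat.add_sub_cancel, Nat.sub_self, pow_zero, Module.End.one_apply,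
      add_assoc]

end Commutator

theorem Polynomial.sum_Icc_one_X_pow_succ {R : Type*} [Semiring R] (k : ℕ) :
    ∑ i ∈ Finset.Icc 1 (k + 1), (X : R[X]) ^ i = X * ∑ i ∈ Finset.Icc 1 k, (X : R[X]) ^ i + X := by
  induction k with
  | zero => simp
  | succ k ih =>
    calc ∑ i ∈ Finset.Icc 1 (k + 2), (X : R[X]) ^ i
        = ∑ i ∈ Finset.Icc 1 (k + 1), (X : R[X]) ^ i + X ^ (k + 2) :=
          Finset.sum_Icc_succ_top (by omega) _
      _ = X * (∑ i ∈ Finset.Icc 1 k, (X : R[X]) ^ i + X ^ (k + 1)) + X := by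
          rw [ih, mul_add, ← pow_succ', add_right_comm]
      _ = X * ∑ i ∈ Finset.Icc 1 (k + 1), (X : R[X]) ^ i + X := by
          rw [Finset.sum_Icc_succ_top (by omega)]

namespace Motzkin

variable {R : Type*} [CommSemiring R] {L : Module.End R R[X]}

-- `hL1` is the case `k = 0`, the sum over `Finset.Icc 1 0` being empty.
theorem apply_X_pow_succ (hL1 : L X = X ^ 2)
    (hL : ∀ k : ℕ, 2 ≤ k → L (X ^ k) = (∑ i ∈ Finset.Icc 1 (k - 1), X ^ i) + X ^ (k + 1))
    (k : ℕ) : L (X ^ (k + 1)) = (∑ i ∈ Finset.Icc 1 k, X ^ i) + X ^ (k + 2) := by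
  rcases k with _ | k
  · simpa using hL1
  · simpa using hL (k + 2) (by omega)

variable (hL : ∀ k : ℕ, L (X ^ (k + 1)) = (∑ i ∈ Finset.Icc 1 k, X ^ i) + X ^ (k + 2))
include hL

theorem X_dvd_apply_X_mul (q : R[X]) : X ∣ L (X * q) := by
  induction q using Polynomial.induction_on' with
  | add p q hp hq => rw [mul_add, map_add]; exact dvd_add hp hq
  | monomial k a =>
    rw [← smul_X_eq_monomial, mul_smul_comm, ← pow_succ', map_smul, hL]
    refine dvd_smul_of_dvd a (dvd_add (Finset.dvd_sum fun i hi => ?_) (dvd_pow_self X (by omega)))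
    exact dvd_pow_self X (by simp at hi; omega)

theorem apply_X_pow_add_two (k : ℕ) : L (X ^ (k + 2)) = X * L (X ^ (k + 1)) + X := by
  rw [hL, hL, sum_Icc_one_X_pow_succ, mul_add, ← pow_succ', add_right_comm]

theorem apply_X_mul_X_mul (q : R[X]) :
    L (X * (X * q)) = X * L (X * q) + (X * q).eval 1 • X := by
  induction q using Polynomial.induction_on' with
  | add p q hp hq => simp only [mul_add, map_add, hp, hq, eval_add, add_smul]; abel
  | monomial k a =>
    simp only [← smul_X_eq_monomial, mul_smul_comm, ← pow_succ', map_smul, apply_X_pow_add_two hL,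
      eval_smul, eval_pow, eval_X, one_pow, smul_eq_mul, mul_one, smul_add]

end Motzkin

/-- For the Motzkin rule operator `L`, one has
`L^n ∘ 𝐱 = 𝐱 ∘ L^n + Σ_{i=0}^{n-1} L^i ∘ c₁ ∘ L^{n-1-i}` on the subspace of
polynomials with zero constant coefficient, where `c₁ : p ↦ p(1)·X`. -/
theorem motzkin_operator_power_mul_X
    (L : Module.End ℝ (Polynomial ℝ))
    (hL1 : L X = X ^ 2)
    (hL : ∀ k : ℕ, 2 ≤ k →
      L (X ^ k) = (∑ i ∈ Finset.Icc 1 (k - 1), X ^ i) + X ^ (k + 1))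
    (n : ℕ) (p : Polynomial ℝ) (hp : p.coeff 0 = 0) :
    (L ^ n) (X * p) =
      X * (L ^ n) p +
        ∑ i ∈ Finset.range n, ((L ^ (n - 1 - i)) p).eval 1 • (L ^ i) X := by
  have hLpow := Motzkin.apply_X_pow_succ hL1 hL
  have hS : Set.MapsTo L {p | X ∣ p} {p | X ∣ p} := by
    rintro _ ⟨q, rfl⟩
    exact Motzkin.X_dvd_apply_X_mul hLpow q
  have hLX : ∀ p ∈ {p : ℝ[X] | X ∣ p}, L (X * p) = X * L p + p.eval 1 • X := by
    rintro _ ⟨q, rfl⟩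
    exact Motzkin.apply_X_mul_X_mul hLpow q
  simpa only [LinearMap.mulLeft_apply, map_smul] using
    Module.End.pow_apply_of_apply_eq_add (T := LinearMap.mulLeft ℝ X) hS hLX n (X_dvd_iff.mpr hp)
end

section
/- Let L be the Motzkin rule operator and for natural numbers n and b ≥ 1 set f_n^{(b)} = (L^n(X^b)) evaluated at X = 1. Then for every b ≥ 1 and every n, f_n^{(b+1)} = f_n^{(b)} + Σ_{i=0}^{n-1} f_i^{(1)} · f_{n-1-i}^{(b)}. -/
/-!
Write `X^(b+1) = X^b + (X - 1) X^(b-1) X`. Since `T ((X - 1) q) = q`, the description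
`L = X T + X - 1` on `X ℝ[X]` gives the commutation rule
`L ((X - 1) s p) = (X - 1) s L p + p(1) X s` for `X ∣ p`. Iterating it on `p = L^i X` produces
the convolution sum, and the remaining term `(X - 1) X^(b-1) L^n X` vanishes at `1`.
-/

open Polynomial

structure IsMotzkinRule (L : Module.End ℝ ℝ[X]) : Prop where
  apply_X : L X = X ^ 2
  apply_X_pow : ∀ k : ℕ, 2 ≤ k →
    L (X ^ k) = (∑ i ∈ Finset.Icc 1 (k - 1), X ^ i) + X ^ (k + 1)

namespace IsMotzkinRule

variable {L : Module.End ℝ ℝ[X]}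

theorem sub_one_mul_apply_X_pow (hL : IsMotzkinRule L) {k : ℕ} (hk : 1 ≤ k) :
    (X - 1) * L (X ^ k) = X ^ (k + 2) - X ^ (k + 1) + X ^ k - X := by
  obtain rfl | hk2 := hk.eq_or_lt
  · rw [pow_one, hL.apply_X]
    ring
  · obtain ⟨j, rfl⟩ : ∃ j, k = j + 1 := ⟨k - 1, by omega⟩
    rw [hL.apply_X_pow _ hk2, Nat.add_sub_cancel, ← Finset.Ico_add_one_right_eq_Icc,
      mul_add, mul_comm, geom_sum_Ico_mul _ (by omega)]
    ring

/-- On `X ℝ[X]`, `L = X T + X - 1` with the factorial derivative `T p = (p - p(1)) / (X - 1)`,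
here cleared of its denominator. -/
theorem sub_one_mul_apply (hL : IsMotzkinRule L) {p : ℝ[X]} (hp : X ∣ p) :
    (X - 1) * L p = X * (p - C (p.eval 1)) + (X - 1) ^ 2 * p := by
  obtain ⟨q, rfl⟩ := hp
  induction q using Polynomial.induction_on' with
  | add q r hq hr =>
    simp only [mul_add, map_add, eval_add]
    linear_combination hq + hr
  | monomial n a =>
    have hXpow : X * monomial n a = a • X ^ (n + 1) := by
      rw [← C_mul_X_pow_eq_monomial, smul_eq_C_mul]
      ring
    rw [hXpow, map_smul, mul_smul_comm, hL.sub_one_mul_apply_X_pow (by omega)]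
    simp only [smul_eq_C_mul, eval_mul, eval_C, eval_pow, eval_X, one_pow, mul_one]
    ring

theorem X_dvd_apply (hL : IsMotzkinRule L) {p : ℝ[X]} (hp : X ∣ p) : X ∣ L p := by
  have h := congrArg (eval 0) (hL.sub_one_mul_apply hp)
  rw [X_dvd_iff, coeff_zero_eq_eval_zero] at hp ⊢
  simpa [hp] using h

theorem X_dvd_pow_apply_X (hL : IsMotzkinRule L) (m : ℕ) : X ∣ (L ^ m) X := by
  induction m with
  | zero => exact dvd_rfl
  | succ m ih =>
    rw [pow_succ', Module.End.mul_apply]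
    exact hL.X_dvd_apply ih

theorem apply_sub_one_mul (hL : IsMotzkinRule L) {r : ℝ[X]} (hr : X ∣ r) :
    L ((X - 1) * r) = X * r + (X - 1) ^ 2 * r := by
  have hX1 : (X - 1 : ℝ[X]) ≠ 0 := by simpa using X_sub_C_ne_zero (1 : ℝ)
  refine mul_left_cancel₀ hX1 ?_
  rw [hL.sub_one_mul_apply (dvd_mul_of_dvd_right hr _)]
  simp only [eval_mul, eval_sub, eval_X, eval_one, sub_self, zero_mul, map_zero, sub_zero]
  ring

theorem apply_sub_one_mul_mul (hL : IsMotzkinRule L) (s : ℝ[X]) {p : ℝ[X]} (hp : X ∣ p) :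
    L ((X - 1) * s * p) = (X - 1) * s * L p + C (p.eval 1) * (X * s) := by
  have hT := hL.sub_one_mul_apply hp
  rw [mul_assoc, hL.apply_sub_one_mul (dvd_mul_of_dvd_right hp s)]
  linear_combination (-s) * hT

theorem pow_apply_sub_one_mul_mul_X (hL : IsMotzkinRule L) (s : ℝ[X]) (m : ℕ) :
    (L ^ m) ((X - 1) * s * X) = (X - 1) * s * (L ^ m) X +
      ∑ i ∈ Finset.range m, C (((L ^ i) X).eval 1) * (L ^ (m - 1 - i)) (X * s) := by
  induction m with
  | zero => simp
  | succ m ih =>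
    have hsucc : ∀ (k : ℕ) (q : ℝ[X]), (L ^ (k + 1)) q = L ((L ^ k) q) := fun k q => by
      rw [pow_succ', Module.End.mul_apply]
    have hsum : ∀ i ∈ Finset.range m, L (C (((L ^ i) X).eval 1) * (L ^ (m - 1 - i)) (X * s)) =
        C (((L ^ i) X).eval 1) * (L ^ (m - i)) (X * s) := fun i hi => by
      rw [show m - i = m - 1 - i + 1 by grind, hsucc, ← smul_eq_C_mul, ← smul_eq_C_mul,
        map_smul]
    rw [hsucc, ih, map_add, hL.apply_sub_one_mul_mul s (hL.X_dvd_pow_apply_X m), map_sum,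
      Finset.sum_congr rfl hsum, Finset.sum_range_succ, ← hsucc]
    simp only [Nat.add_sub_cancel, Nat.sub_self, pow_zero, Module.End.one_apply]
    ring

end IsMotzkinRule

/-- For the Motzkin rule operator `L` and the associated family of
sequences `f n b = [L^n(X^b)]_{X=1}`, one has, for `b ≥ 1` and every `n`,
`f_n^{(b+1)} = f_n^{(b)} + Σ_{i=0}^{n-1} f_i^{(1)} f_{n-1-i}^{(b)}`. -/
theorem motzkin_sequence_recursion
    (L : Module.End ℝ (Polynomial ℝ))
    (hL1 : L X = X ^ 2)
    (hL : ∀ k : ℕ, 2 ≤ k →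
      L (X ^ k) = (∑ i ∈ Finset.Icc 1 (k - 1), X ^ i) + X ^ (k + 1))
    (f : ℕ → ℕ → ℝ) (hf : ∀ n b, f n b = ((L ^ n) (X ^ b)).eval 1)
    (b : ℕ) (hb : 1 ≤ b) (n : ℕ) :
    f n (b + 1) = f n b + ∑ i ∈ Finset.range n, f i 1 * f (n - 1 - i) b := by
  have hX : (X - 1 : ℝ[X]) * X ^ (b - 1) * X = X ^ (b + 1) - X ^ b := by
    rw [mul_assoc, ← pow_succ, Nat.sub_add_cancel hb]
    ring
  have hMotzkin : IsMotzkinRule L := ⟨hL1, hL⟩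
  have h := congrArg (eval 1) (hMotzkin.pow_apply_sub_one_mul_mul_X (X ^ (b - 1)) n)
  rw [hX, map_sub, ← pow_succ', Nat.sub_add_cancel hb] at h
  simp only [eval_sub, eval_add, eval_mul, eval_X, eval_one, sub_self, zero_mul, zero_add,
    eval_finsetSum, eval_C] at h
  simp only [hf, pow_one]
  linear_combination h
end

section
/- Let L be the Motzkin rule operator and for natural numbers n and b ≥ 1 set f_n^{(b)} = (L^n(X^b)) evaluated at X = 1. Then for every b ≥ 1, as formal power series over ℝ, Σ_{n≥0} f_n^{(b)} x^n = F¹(x) · (x·F¹(x) + 1)^{b-1}, where F¹(x) = Σ_{n≥0} f_n^{(1)} x^n is the generating function of the sequence with axiom 1 (the Motzkin numbers). In other words, f^{(b)}(x) = f^{(b-1)}(x)·(x·M(x)+1) where M(x) is the Motzkin generating function M(x) = F¹(x). -/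
/-!
On the span of the positive powers of `X`, the Motzkin rule satisfies
`L (X * p) = X * L p + p(1) • X`: the rule for `X ^ (k + 1)` is `X` times the rule for `X ^ k`,
plus `X`. Iterating, `L^(n+1) (X * p) = X * L^(n+1) p + ∑_{i + j = n} [L^i p](1) • L^j X`, and
evaluating at `1` turns this into `f^(b+1)(x) = f^(b)(x) * (x * F¹(x) + 1)`; induction on `b`
concludes.
-/

open Polynomial Finset

theorem Finset.mul_sum_Icc_pow_add_self {M : Type*} [Semiring M] (x : M) (m : ℕ) :
    x * ∑ i ∈ Icc 1 m, x ^ i + x = ∑ i ∈ Icc 1 (m + 1), x ^ i := by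
  induction m with
  | zero => simp
  | succ m ih =>
    rw [sum_Icc_succ_top (b := m) (by omega), sum_Icc_succ_top (b := m + 1) (by omega), ← ih,
      mul_add, ← pow_succ']
    abel

theorem PowerSeries.mk_eq_mul_X_mul_add_one {R : Type*} [CommSemiring R] {a c m : ℕ → R}
    (h0 : c 0 = a 0)
    (hsucc : ∀ n, c (n + 1) = a (n + 1) + ∑ ij ∈ antidiagonal n, a ij.1 * m ij.2) :
    PowerSeries.mk c = PowerSeries.mk a * (PowerSeries.X * PowerSeries.mk m + 1) := by
  ext (_ | n)
  · simp [h0]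
  · rw [mul_add, mul_one, mul_left_comm, map_add, PowerSeries.coeff_succ_X_mul,
      PowerSeries.coeff_mul]
    simp only [PowerSeries.coeff_mk, hsucc]
    rw [add_comm]

variable {R : Type*} [CommSemiring R]

structure IsMotzkinRuleOperator (L : Module.End R R[X]) : Prop where
  map_X : L X = X ^ 2
  map_X_pow : ∀ k : ℕ, 2 ≤ k → L (X ^ k) = (∑ i ∈ Icc 1 (k - 1), X ^ i) + X ^ (k + 1)

variable (R) in
noncomputable def positivePowers : Submodule R R[X] :=
  Submodule.span R (Set.range fun k : ℕ => (X : R[X]) ^ (k + 1))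

theorem X_pow_mem_positivePowers {k : ℕ} (hk : 1 ≤ k) : (X : R[X]) ^ k ∈ positivePowers R :=
  Submodule.subset_span ⟨k - 1, by simp only [Nat.sub_add_cancel hk]⟩

noncomputable def genFun (L : Module.End R R[X]) (p : R[X]) : PowerSeries R :=
  PowerSeries.mk fun n => ((L ^ n) p).eval 1

namespace IsMotzkinRuleOperator

variable {L : Module.End R R[X]} (hL : IsMotzkinRuleOperator L)
include hL

theorem map_X_pow_add_two (k : ℕ) :
    L (X ^ (k + 2)) = (∑ i ∈ Icc 1 (k + 1), X ^ i) + X ^ (k + 3) :=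
  hL.map_X_pow (k + 2) (by omega)

theorem map_X_mul_X_pow (k : ℕ) : L (X * X ^ (k + 1)) = X * L (X ^ (k + 1)) + X := by
  rw [← pow_succ', hL.map_X_pow_add_two]
  cases k with
  | zero => simp only [zero_add, Icc_self, sum_singleton, pow_one, hL.map_X]; ring
  | succ m =>
    rw [hL.map_X_pow_add_two, ← mul_sum_Icc_pow_add_self]
    ring

theorem mapsTo_positivePowers : Set.MapsTo L (positivePowers R) (positivePowers R) := by
  change positivePowers R ≤ (positivePowers R).comap L
  refine Submodule.span_le.mpr (Set.range_subset_iff.mpr fun k => ?_)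
  cases k with
  | zero => simpa [hL.map_X] using X_pow_mem_positivePowers (R := R) one_le_two
  | succ m =>
    rw [SetLike.mem_coe, Submodule.mem_comap, hL.map_X_pow_add_two]
    refine add_mem (sum_mem fun i hi => ?_) (X_pow_mem_positivePowers (by omega))
    exact X_pow_mem_positivePowers (mem_Icc.mp hi).1

theorem map_X_mul {p : R[X]} (hp : p ∈ positivePowers R) :
    L (X * p) = X * L p + p.eval 1 • X := by
  have hspan : Set.EqOn (L ∘ₗ LinearMap.mulLeft R X)
      (LinearMap.mulLeft R X ∘ₗ L + (leval (1 : R)).smulRight X : R[X] →ₗ[R] R[X])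
      (positivePowers R) := by
    refine LinearMap.eqOn_span' ?_
    rintro _ ⟨k, rfl⟩
    simpa using hL.map_X_mul_X_pow k
  simpa using hspan hp

theorem pow_succ_map_X_mul {p : R[X]} (hp : p ∈ positivePowers R) (n : ℕ) :
    (L ^ (n + 1)) (X * p) =
      X * (L ^ (n + 1)) p + ∑ ij ∈ antidiagonal n, ((L ^ ij.1) p).eval 1 • (L ^ ij.2) X := by
  induction n with
  | zero => simp [hL.map_X_mul hp]
  | succ n ih =>
    have hLp : (L ^ (n + 1)) p ∈ positivePowers R := by
      rw [Module.End.pow_apply]; exact hL.mapsTo_positivePowers.iterate _ hp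
    rw [pow_succ', Module.End.mul_apply, ih, map_add, hL.map_X_mul hLp, map_sum,
      Nat.sum_antidiagonal_succ']
    simp only [map_smul, pow_zero, Module.End.one_apply, pow_succ' L, Module.End.mul_apply]
    abel

theorem genFun_X_mul {p : R[X]} (hp : p ∈ positivePowers R) :
    genFun L (X * p) = genFun L p * (PowerSeries.X * genFun L X + 1) := by
  refine PowerSeries.mk_eq_mul_X_mul_add_one (by simp) fun n => ?_
  rw [hL.pow_succ_map_X_mul hp, eval_add, eval_mul, eval_X, one_mul, eval_finsetSum]
  simp only [eval_smul, smul_eq_mul]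

end IsMotzkinRuleOperator

/-- For the Motzkin rule operator `L` and the associated family
of sequences `f n b = [L^n(X^b)]_{X=1}`, for every axiom `b ≥ 1` the ordinary
generating function of `(f_n^{(b)})_n` equals `M(x)·(x·M(x)+1)^{b-1}`, where
`M(x)` is the generating function of the sequence with axiom 1 (the Motzkin
numbers). -/
theorem motzkin_sequence_generating_function
    (L : Module.End ℝ (Polynomial ℝ))
    (hL1 : L X = X ^ 2)
    (hL : ∀ k : ℕ, 2 ≤ k →
      L (X ^ k) = (∑ i ∈ Finset.Icc 1 (k - 1), X ^ i) + X ^ (k + 1))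
    (f : ℕ → ℕ → ℝ) (hf : ∀ n b, f n b = ((L ^ n) (X ^ b)).eval 1)
    (b : ℕ) (hb : 1 ≤ b) :
    PowerSeries.mk (fun n => f n b) =
      PowerSeries.mk (fun n => f n 1) *
        (PowerSeries.X * PowerSeries.mk (fun n => f n 1) + 1) ^ (b - 1) := by
  have hM : IsMotzkinRuleOperator L := ⟨hL1, hL⟩
  have hgen (b : ℕ) : PowerSeries.mk (fun n => f n b) = genFun L (X ^ b) := by
    simp only [hf, genFun]
  simp only [hgen, pow_one]
  induction b, hb using Nat.le_induction with
  | base => simp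
  | succ b hb ih =>
    rw [pow_succ', hM.genFun_X_mul (X_pow_mem_positivePowers hb), ih, Nat.add_sub_cancel,
      mul_assoc, ← pow_succ, Nat.sub_add_cancel hb]
end

section
/- Let L and M be commuting ℝ-linear endomorphisms of ℝ[X] (i.e. L∘M = M∘L), let b be a natural number, and let (p_n)_{n∈ℕ} be the sequence of level polynomials of the doubled mixed succession rule (b)L^{+1}M^{+2}, defined by p_0 = X^b, p_1 = L(p_0), and p_{n+2} = L(p_{n+1}) + M(p_n) for all n. Then the associated numerical sequence f_n^{(b)} = p_n(1) satisfies, for every n, f_n^{(b)} = Σ_{k=0}^{⌊n/2⌋} C(n-k, k) · Σ_i μ_{k,i}^{(b)} · l_{n-2k}^{(i)}, where μ_{k,i}^{(b)} is the coefficient of X^i in M^k(X^b) (the i-sum ranging over 0 ≤ i ≤ deg(M^k(X^b))) and l_m^{(i)} = (L^m(X^i)) evaluated at X = 1 is the sequence associated with L with axiom i. -/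
/-!
Writing `F n := ∑_{k ≤ n/2} C(n-k,k) L^(n-2k) M^k`, Pascal's rule shows that `F` satisfies
`F (n+2) = L F (n+1) + M F n` as soon as `L` and `M` commute. The level polynomials obey the same
recurrence with the same initial values, so `p n = F n (X^b)`; evaluating at `1` and expanding
`M^k (X^b)` in the monomial basis gives the formula.
-/

open Polynomial Finset

lemma sum_range_choose_sub_smul_eq_of_lt {M : Type*} [AddCommMonoid M] (f : ℕ → M)
    {n N : ℕ} (hN : n / 2 < N) :
    ∑ k ∈ range (n / 2 + 1), (n - k).choose k • f k = ∑ k ∈ range N, (n - k).choose k • f k := by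
  refine sum_subset (range_subset_range.2 hN) fun k _ hk => ?_
  rw [Nat.choose_eq_zero_of_lt (by simp at hk; omega), zero_smul]

section BivariateFib

variable {R : Type*} [Semiring R] (a b : R)

def bivariateFib (n : ℕ) : R :=
  ∑ k ∈ range (n / 2 + 1), (n - k).choose k • (a ^ (n - 2 * k) * b ^ k)

@[simp] lemma bivariateFib_zero : bivariateFib a b 0 = 1 := by simp [bivariateFib]

@[simp] lemma bivariateFib_one : bivariateFib a b 1 = a := by simp [bivariateFib]

variable {a b}

lemma mul_bivariateFib_add_one (n : ℕ) :
    a * bivariateFib a b (n + 1) =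
      ∑ k ∈ range (n / 2 + 1), (n - k).choose (k + 1) • (a ^ (n - 2 * k) * b ^ (k + 1)) +
        a ^ (n + 2) := by
  have hshift : ∀ k ∈ range ((n + 1) / 2 + 1),
      a * ((n + 1 - k).choose k • (a ^ (n + 1 - 2 * k) * b ^ k)) =
        (n + 1 - k).choose k • (a ^ (n + 2 - 2 * k) * b ^ k) := by
    intro k hk
    have : n + 2 - 2 * k = n + 1 - 2 * k + 1 := by simp at hk; omega
    rw [mul_smul_comm, ← mul_assoc, ← pow_succ', this]
  rw [bivariateFib, mul_sum, sum_congr rfl hshift,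
    sum_range_choose_sub_smul_eq_of_lt _ (N := n / 2 + 1 + 1) (by omega), sum_range_succ']
  simp [Nat.add_sub_add_right, Nat.mul_succ]

lemma Commute.mul_bivariateFib (h : Commute a b) (n : ℕ) :
    b * bivariateFib a b n =
      ∑ k ∈ range (n / 2 + 1), (n - k).choose k • (a ^ (n - 2 * k) * b ^ (k + 1)) := by
  rw [bivariateFib, mul_sum]
  refine sum_congr rfl fun k _ => ?_
  rw [mul_smul_comm, ← mul_assoc, (h.symm.pow_right _).eq, mul_assoc, ← pow_succ']

theorem Commute.bivariateFib_add_two (h : Commute a b) (n : ℕ) :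
    bivariateFib a b (n + 2) = a * bivariateFib a b (n + 1) + b * bivariateFib a b n := by
  have hlead : bivariateFib a b (n + 2) =
      ∑ k ∈ range (n / 2 + 1), (n + 1 - k).choose (k + 1) • (a ^ (n - 2 * k) * b ^ (k + 1)) +
        a ^ (n + 2) := by
    rw [bivariateFib, show (n + 2) / 2 = n / 2 + 1 by omega, sum_range_succ']
    simp [Nat.add_sub_add_right, Nat.mul_succ]
  rw [hlead, mul_bivariateFib_add_one, h.mul_bivariateFib, add_right_comm, ← sum_add_distrib]
  congr 1
  refine sum_congr rfl fun k hk => ?_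
  rw [show n + 1 - k = n - k + 1 by simp at hk; omega, Nat.choose_succ_succ', add_smul, add_comm]

end BivariateFib

theorem Commute.eq_bivariateFib_apply {R V : Type*} [Semiring R] [AddCommMonoid V] [Module R V]
    {L M : Module.End R V} (h : Commute L M) {p : ℕ → V} (hp1 : p 1 = L (p 0))
    (hrec : ∀ n, p (n + 2) = L (p (n + 1)) + M (p n)) (n : ℕ) :
    p n = bivariateFib L M n (p 0) := by
  induction n using Nat.twoStepInduction with
  | zero => simp
  | one => simp [hp1]
  | more m ih1 ih2 => rw [hrec, h.bivariateFib_add_two, ih1, ih2]; rfl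

lemma Polynomial.eval_linearMap_apply {R : Type*} [CommSemiring R] (f : R[X] →ₗ[R] R[X])
    (q : R[X]) (x : R) :
    (f q).eval x = ∑ i ∈ range (q.natDegree + 1), q.coeff i * (f (X ^ i)).eval x := by
  conv_lhs => rw [q.as_sum_range_C_mul_X_pow]
  simp [← smul_eq_C_mul, eval_finsetSum]

/-- main theorem, commuting case: If `L` and `M` are commuting
rule operators and `(p_n)` are the level polynomials of the doubled mixed
succession rule `(b)L^{+1}M^{+2}`, then the associated numerical sequence
`f_n^{(b)} = p_n(1)` satisfies
`f_n^{(b)} = Σ_{k=0}^{⌊n/2⌋} C(n-k,k) Σ_i μ_{k,i}^{(b)} l_{n-2k}^{(i)}`,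
where `μ_{k,i}^{(b)}` is the coefficient of `X^i` in `M^k(X^b)` and
`l_m^{(i)} = [L^m(X^i)]_{X=1}`. -/
theorem mixed_rule_sequence_of_commute
    (L M : Module.End ℝ (Polynomial ℝ)) (hcomm : L * M = M * L)
    (b : ℕ) (p : ℕ → Polynomial ℝ)
    (hp0 : p 0 = X ^ b) (hp1 : p 1 = L (p 0))
    (hrec : ∀ n, p (n + 2) = L (p (n + 1)) + M (p n)) (n : ℕ) :
    (p n).eval 1 = ∑ k ∈ Finset.range (n / 2 + 1),
      (Nat.choose (n - k) k : ℝ) *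
        ∑ i ∈ Finset.range (((M ^ k) (X ^ b)).natDegree + 1),
          ((M ^ k) (X ^ b)).coeff i * ((L ^ (n - 2 * k)) (X ^ i)).eval 1 := by
  rw [Commute.eq_bivariateFib_apply hcomm hp1 hrec, hp0, bivariateFib, LinearMap.sum_apply,
    eval_finsetSum]
  refine sum_congr rfl fun k _ => ?_
  rw [LinearMap.smul_apply, Module.End.mul_apply, eval_smul, nsmul_eq_mul,
    eval_linearMap_apply]
end

section
/- Let L be an ℝ-linear endomorphism of ℝ[X], let b be a natural number, and let (p_n)_{n∈ℕ} be defined by p_0 = X^b, p_1 = L(p_0), and p_{n+2} = L(p_{n+1}) + p_n for all n (the level polynomials of the doubled mixed rule (b)L^{+1}𝟙^{+2}, where 𝟙 is the identity operator). Then for every n, p_n(1) = Σ_{k=0}^{⌊n/2⌋} C(n-k, k) · l_{n-2k}^{(b)}, where l_m^{(b)} = (L^m(X^b)) evaluated at X = 1. (Equivalently, in terms of ordinary generating functions, f^{(b)}(x) = (1/(1−x²)) · l^{(b)}(x/(1−x²)).) -/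
/-!
The recurrence `p (n + 2) = L (p (n + 1)) + p n` is the Fibonacci recurrence with `L` in place
of the variable, so `p n = Fₙ(L) (X ^ b)` for the Fibonacci polynomials `F₀ = 1`, `F₁ = t`,
`Fₙ₊₂ = t Fₙ₊₁ + Fₙ` (`fibonacciSum`). Their coefficients are `C(n - k, k)` by Pascal's rule on
the antidiagonal, as in `Nat.fib_succ_eq_sum_choose`, and evaluation at `1` is linear.
-/

open Polynomial Finset

section Fibonacci

variable {A : Type*} [Semiring A]

def fibonacciSum (a : A) (n : ℕ) : A :=
  ∑ k ∈ range (n / 2 + 1), ((n - k).choose k : A) * a ^ (n - 2 * k)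

@[simp]
theorem fibonacciSum_zero (a : A) : fibonacciSum a 0 = 1 := by
  simp [fibonacciSum]

@[simp]
theorem fibonacciSum_one (a : A) : fibonacciSum a 1 = a := by
  simp [fibonacciSum]

theorem fibonacciSum_eq_sum_antidiagonal (a : A) (n : ℕ) :
    fibonacciSum a n = ∑ p ∈ antidiagonal n, (p.1.choose p.2 : A) * a ^ (p.1 - p.2) := by
  rw [← Nat.sum_antidiagonal_swap, Nat.sum_antidiagonal_eq_sum_range_succ_mk, fibonacciSum]
  simp only [Prod.fst_swap, Prod.snd_swap, Nat.sub_sub, ← two_mul]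
  refine sum_subset (range_subset_range.2 (by omega)) fun k hk hk' => ?_
  simp only [mem_range] at hk hk'
  simp [Nat.choose_eq_zero_of_lt (show n - k < k by omega)]

-- When `i ≤ j` both sides vanish, so the truncated subtractions do no harm.
theorem cast_choose_succ_mul_pow_sub (a : A) (i j : ℕ) :
    (i.choose (j + 1) : A) * a ^ (i - j) = a * ((i.choose (j + 1) : A) * a ^ (i - (j + 1))) := by
  rcases lt_or_ge j i with h | h
  · rw [← mul_assoc, ← Nat.cast_comm, mul_assoc, ← pow_succ']
    congr 2
    omega
  · simp [Nat.choose_eq_zero_of_lt (show i < j + 1 by omega)]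

theorem fibonacciSum_add_two (a : A) (n : ℕ) :
    fibonacciSum a (n + 2) = a * fibonacciSum a (n + 1) + fibonacciSum a n := by
  simp only [fibonacciSum_eq_sum_antidiagonal, Nat.antidiagonal_succ_succ', Nat.antidiagonal_succ']
  simp [Nat.choose_succ_succ, add_mul, mul_add, sum_add_distrib, mul_sum,
    cast_choose_succ_mul_pow_sub, pow_succ', add_left_comm, add_comm]

end Fibonacci

theorem Module.End.eq_fibonacciSum_apply {R M : Type*} [Semiring R] [AddCommMonoid M]
    [Module R M] (L : Module.End R M) (p : ℕ → M) (hp1 : p 1 = L (p 0))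
    (hrec : ∀ n, p (n + 2) = L (p (n + 1)) + p n) (n : ℕ) :
    p n = fibonacciSum L n (p 0) := by
  induction n using Nat.twoStepInduction with
  | zero => simp
  | one => simp [hp1]
  | more n ih1 ih2 =>
    rw [hrec, ih1, ih2, fibonacciSum_add_two, LinearMap.add_apply, Module.End.mul_apply]

/-- For any rule operator `L`, the numerical sequence associated
with the doubled mixed succession rule `(b)L^{+1}𝟙^{+2}` (where `𝟙` is the
identity operator) satisfies
`f_n^{(b)} = Σ_{k=0}^{⌊n/2⌋} C(n-k,k) l_{n-2k}^{(b)}`, where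
`l_m^{(b)} = [L^m(X^b)]_{X=1}`. -/
theorem mixed_rule_with_identity_second
    (L : Module.End ℝ (Polynomial ℝ))
    (b : ℕ) (p : ℕ → Polynomial ℝ)
    (hp0 : p 0 = X ^ b) (hp1 : p 1 = L (p 0))
    (hrec : ∀ n, p (n + 2) = L (p (n + 1)) + p n) (n : ℕ) :
    (p n).eval 1 = ∑ k ∈ Finset.range (n / 2 + 1),
      (Nat.choose (n - k) k : ℝ) * ((L ^ (n - 2 * k)) (X ^ b)).eval 1 := by
  rw [L.eq_fibonacciSum_apply p hp1 hrec, hp0, fibonacciSum, LinearMap.sum_apply, eval_finsetSum]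
  simp only [Module.End.mul_apply, Module.End.natCast_apply, nsmul_eq_mul, eval_mul, eval_natCast]
end

section
/- Let M be an ℝ-linear endomorphism of ℝ[X], let b be a natural number, and let (p_n)_{n∈ℕ} be defined by p_0 = X^b, p_1 = p_0, and p_{n+2} = p_{n+1} + M(p_n) for all n (the level polynomials of the doubled mixed rule (b)𝟙^{+1}M^{+2}, where 𝟙 is the identity operator). Then for every n, p_n(1) = Σ_{k=0}^{⌊n/2⌋} C(n-k, k) · m_k^{(b)}, where m_k^{(b)} = (M^k(X^b)) evaluated at X = 1. (Equivalently, in terms of ordinary generating functions, f^{(b)}(x) = (1/(1−x)) · m^{(b)}(x²/(1−x)).) -/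
/-!
Unfolding the recurrence gives `p n = ∑_{i + j = n} C(i, j) • M^j (p 0)` in any module, exactly
as `F (n + 1) = ∑_{i + j = n} C(i, j)` for the Fibonacci numbers (Pascal's rule matches the two
recurrences). Only the terms with `j ≤ n / 2` are nonzero, and evaluation at `1` is additive.
-/

open Finset Polynomial

theorem eq_sum_antidiagonal_choose_smul_pow_apply {R V : Type*} [Semiring R] [AddCommMonoid V]
    [Module R V] (M : Module.End R V) (p : ℕ → V) (hp1 : p 1 = p 0)
    (hrec : ∀ n, p (n + 2) = p (n + 1) + M (p n)) (n : ℕ) :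
    p n = ∑ q ∈ antidiagonal n, q.1.choose q.2 • (M ^ q.2) (p 0) := by
  induction n using Nat.twoStepInduction with
  | zero => simp
  | one => simp [hp1, Nat.antidiagonal_succ]
  | more n ih ih1 =>
    rw [hrec, ih, ih1, map_sum, Nat.antidiagonal_succ_succ', Nat.antidiagonal_succ']
    simp [Nat.choose_succ_succ, add_smul, sum_add_distrib, pow_succ', add_left_comm, add_comm]

theorem sum_antidiagonal_choose_smul_eq_sum_range {V : Type*} [AddCommMonoid V] (g : ℕ → V)
    (n : ℕ) :
    ∑ q ∈ antidiagonal n, q.1.choose q.2 • g q.2 =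
      ∑ k ∈ range (n / 2 + 1), (n - k).choose k • g k := by
  rw [← Nat.sum_antidiagonal_swap]
  refine (Nat.sum_antidiagonal_eq_sum_range_succ (fun i j => j.choose i • g i) n).trans ?_
  refine (sum_subset (range_subset_range.2 (by omega)) fun k _ hk => ?_).symm
  rw [Nat.choose_eq_zero_of_lt (by simp at hk; omega), zero_smul]

/-- For any rule operator `M`, the numerical sequence associated
with the doubled mixed succession rule `(b)𝟙^{+1}M^{+2}` (where `𝟙` is the
identity operator) satisfies
`f_n^{(b)} = Σ_{k=0}^{⌊n/2⌋} C(n-k,k) m_k^{(b)}`, where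
`m_k^{(b)} = [M^k(X^b)]_{X=1}`. -/
theorem mixed_rule_with_identity_first
    (M : Module.End ℝ (Polynomial ℝ))
    (b : ℕ) (p : ℕ → Polynomial ℝ)
    (hp0 : p 0 = X ^ b) (hp1 : p 1 = p 0)
    (hrec : ∀ n, p (n + 2) = p (n + 1) + M (p n)) (n : ℕ) :
    (p n).eval 1 = ∑ k ∈ Finset.range (n / 2 + 1),
      (Nat.choose (n - k) k : ℝ) * ((M ^ k) (X ^ b)).eval 1 := by
  rw [eq_sum_antidiagonal_choose_smul_pow_apply M p hp1 hrec,
    sum_antidiagonal_choose_smul_eq_sum_range (fun k => (M ^ k) (p 0)), hp0, eval_finsetSum]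
  simp only [nsmul_eq_mul, eval_natCast_mul]
end

section
/- Let L be the ℝ-linear endomorphism of ℝ[X] with L(1) = X and L(X^k) = k·X^{k+1} for all k ≥ 1 (the factorial rule operator with axiom 1). Let a ≥ 1 be a natural number and let M be an ℝ-linear endomorphism of ℝ[X] with M(1) = X^a. Then M commutes with L (i.e. L∘M = M∘L) if and only if M(X^n) = n·C(a+n−1, a−1)·X^{a+n} for every n ≥ 1; that is, if and only if M = L_{[a]} = (x^{a+1}/(a−1)!)·D^a·x^{a−1}, where D is the derivative operator. -/
/-!
Both `L` and `L_{[a]}` are weighted shifts on the monomial basis: `L` sends `X^n` to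
`max n 1 • X^(n+1)` with nonzero weights, so an operator `M` commuting with `L` is pinned
down by `M 1`, one monomial at a time (`max n 1 • M (X^(n+1)) = L (M (X^n))`). The weights of
`L_{[a]}` satisfy exactly the recurrence this forces, which comes down to the binomial identity
`C(a+n-1, a-1) · (a+n) = C(a+n, a-1) · (n+1)`.
-/

open Polynomial

section WeightedShift

variable {R : Type*} [CommRing R] [IsDomain R]
  {L M : Module.End R R[X]} {w c : ℕ → R} {a : ℕ}

theorem commute_iff_of_weighted_shift (hL : ∀ n, L (X ^ n) = w n • X ^ (n + 1))
    (hw : ∀ n, w n ≠ 0) (hc : ∀ n, w n * c (n + 1) = w (a + n) * c n)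
    (hM0 : M 1 = c 0 • X ^ a) :
    L * M = M * L ↔ ∀ n, M (X ^ n) = c n • X ^ (a + n) := by
  have shift_image (n : ℕ) :
      L (c n • X ^ (a + n)) = (w n * c (n + 1)) • X ^ (a + (n + 1)) := by
    rw [map_smul, hL, smul_smul, mul_comm, ← hc, add_assoc]
  constructor
  · intro hcomm n
    induction n with
    | zero => simpa using hM0
    | succ n ih =>
      have h := LinearMap.congr_fun hcomm (X ^ n)
      rw [Module.End.mul_apply, Module.End.mul_apply, ih, shift_image, hL, map_smul,
        mul_smul] at h
      exact (smul_right_injective R[X] (hw n) h).symm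
  · intro hM
    refine lhom_ext' fun n => LinearMap.ext fun r => ?_
    simp only [LinearMap.comp_apply, ← smul_X_eq_monomial, map_smul, Module.End.mul_apply]
    rw [hM, shift_image, hL, map_smul, hM, mul_smul]

end WeightedShift

/-- The coefficient of `L_{[a]}` on `X^n`; the value `1` at `n = 0` comes from `M 1 = X^a`. -/
def commutantCoeff (a n : ℕ) : ℕ :=
  if n = 0 then 1 else n * (a + n - 1).choose (a - 1)

theorem max_one_mul_commutantCoeff_succ {a : ℕ} (ha : 1 ≤ a) (n : ℕ) :
    max n 1 * commutantCoeff a (n + 1) = max (a + n) 1 * commutantCoeff a n := by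
  obtain ⟨b, rfl⟩ : ∃ b, a = b + 1 := ⟨a - 1, by omega⟩
  rcases n with _ | n
  · simp [commutantCoeff, Nat.choose_succ_self_right]
  · have binom : (b + n + 1).choose b * (b + n + 2) = (b + n + 2).choose b * (n + 2) := by
      rw [Nat.choose_mul_succ_eq]
      congr 2
      omega
    have hmax : max (n + 1) 1 = n + 1 ∧ max (b + 1 + (n + 1)) 1 = b + n + 2 := by omega
    rw [hmax.1, hmax.2, commutantCoeff, commutantCoeff, if_neg (by omega), if_neg (by omega),
      show b + 1 + (n + 1) - 1 = b + n + 1 by omega,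
      show b + 1 + (n + 1 + 1) - 1 = b + n + 2 by omega, Nat.add_sub_cancel]
    calc (n + 1) * ((n + 1 + 1) * (b + n + 2).choose b)
        = (n + 1) * ((b + n + 2).choose b * (n + 2)) := by ring
      _ = (b + n + 2) * ((n + 1) * (b + n + 1).choose b) := by rw [← binom]; ring

/-- Let `L` be the factorial rule operator with axiom 1 (i.e.
`L(1) = X` and `L(X^k) = k·X^(k+1)` for `k ≥ 1`), let `a ≥ 1` and let `M` be a
rule operator with `M(1) = X^a`. Then `M` commutes with `L` if and only if
`M(X^n) = n·C(a+n-1,a-1)·X^(a+n)` for every `n ≥ 1`, i.e. iff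
`M = L_{[a]} = (x^{a+1}/(a-1)!) D^a x^{a-1}`. -/
theorem factorial_operator_commutant
    (L : Module.End ℝ (Polynomial ℝ))
    (hL0 : L 1 = X)
    (hL : ∀ k : ℕ, 1 ≤ k → L (X ^ k) = (k : ℝ) • X ^ (k + 1))
    (a : ℕ) (ha : 1 ≤ a)
    (M : Module.End ℝ (Polynomial ℝ))
    (hM0 : M 1 = X ^ a) :
    L * M = M * L ↔
      ∀ n : ℕ, 1 ≤ n →
        M (X ^ n) = ((n * Nat.choose (a + n - 1) (a - 1) : ℕ) : ℝ) • X ^ (a + n) := by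
  have hL_shift (n : ℕ) : L (X ^ n) = ((max n 1 : ℕ) : ℝ) • X ^ (n + 1) := by
    rcases n with _ | n
    · simp [hL0]
    · simp [hL (n + 1) (by omega)]
  rw [commute_iff_of_weighted_shift (c := fun n => (commutantCoeff a n : ℝ)) hL_shift
    (fun n => by positivity) (fun n => mod_cast max_one_mul_commutantCoeff_succ ha n)
    (by simp [commutantCoeff, hM0])]
  refine forall_congr' fun n => ?_
  rcases n with _ | n
  · simp [commutantCoeff, hM0]
  · simp [commutantCoeff]
end

section
/- Let L and M be ℝ-linear endomorphisms of ℝ[X] with L(X^k) = k·X^{k+1} and M(X^k) = k·(k+1)·X^{k+2} for all k ≥ 1. Let b ≥ 1 and define (p_n)_{n∈ℕ} by p_0 = X^b, p_1 = L(p_0), and p_{n+2} = L(p_{n+1}) + M(p_n) for all n (the level polynomials of the doubled mixed succession rule Ω_b = (b)L^{+1}M^{+2}, i.e. (k) produces (k+1)^k at the next level and (k+2)^{k(k+1)} two levels down). Then for every n, the associated sequence satisfies f_n^{(b)} = p_n(1) = b^{(n)} · Fib(n+1), where b^{(n)} = b·(b+1)·⋯·(b+n−1) is the rising factorial and Fib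 is the Fibonacci sequence with Fib(1) = Fib(2) = 1. In particular for b = 1, f_n = n!·Fib(n+1). -/
/-!
Every level polynomial is a single monomial: `p n = c n • X ^ (b + n)`, because `L` and `M` raise the
degree by one and two. The coefficients then satisfy
`c (n + 2) = (b + n + 1) c (n + 1) + (b + n) (b + n + 1) c n`, and dividing by the rising factorial
`b^{(n+2)} = b^{(n+1)} (b + n + 1) = b^{(n)} (b + n) (b + n + 1)` turns this into the Fibonacci recurrence.
-/

open Polynomial

/-- The coefficient `b^{(n)} · Fib (n + 1)` of the `n`-th level polynomial. -/
def mixedRuleCoeff (b n : ℕ) : ℕ :=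
  (∏ i ∈ Finset.range n, (b + i)) * Nat.fib (n + 1)

lemma mixedRuleCoeff_zero (b : ℕ) : mixedRuleCoeff b 0 = 1 := by
  simp [mixedRuleCoeff]

lemma mixedRuleCoeff_one (b : ℕ) : mixedRuleCoeff b 1 = b := by
  simp [mixedRuleCoeff]

lemma mixedRuleCoeff_add_two (b n : ℕ) :
    mixedRuleCoeff b (n + 2) =
      (b + n + 1) * mixedRuleCoeff b (n + 1) + (b + n) * (b + n + 1) * mixedRuleCoeff b n := by
  simp only [mixedRuleCoeff, Finset.prod_range_succ, Nat.fib_add_two]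
  ring

section LevelPolynomials

variable {L M : Module.End ℝ ℝ[X]}
  (hL : ∀ k : ℕ, 1 ≤ k → L (X ^ k) = (k : ℝ) • X ^ (k + 1))
  (hM : ∀ k : ℕ, 1 ≤ k → M (X ^ k) = ((k * (k + 1) : ℕ) : ℝ) • X ^ (k + 2))
  {b : ℕ} {p : ℕ → ℝ[X]}

include hL hM in
lemma level_eq_mixedRuleCoeff_smul (hb : 1 ≤ b) (hp0 : p 0 = X ^ b) (hp1 : p 1 = L (p 0))
    (hrec : ∀ n, p (n + 2) = L (p (n + 1)) + M (p n)) (n : ℕ) :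
    p n = (mixedRuleCoeff b n : ℝ) • X ^ (b + n) := by
  induction n using Nat.twoStepInduction with
  | zero => simp [hp0, mixedRuleCoeff_zero]
  | one => simp [hp1, hp0, hL b hb, mixedRuleCoeff_one]
  | more n ih₀ ih₁ =>
    rw [hrec, ih₀, ih₁, map_smul, map_smul, hL _ (by omega), hM _ (by omega), smul_smul,
      smul_smul, show b + (n + 1) + 1 = b + (n + 2) by omega, show b + n + 2 = b + (n + 2) by omega,
      ← add_smul, mixedRuleCoeff_add_two]
    congr 1
    push_cast
    ring

end LevelPolynomials

/-- Let `L` be the factorial rule operator (`L(X^k) = k·X^(k+1)`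
for `k ≥ 1`) and `M = L_{[2]}` (`M(X^k) = k(k+1)·X^(k+2)` for `k ≥ 1`). For an
axiom `b ≥ 1`, the numerical sequence of the doubled mixed succession rule
`(b)L^{+1}M^{+2}` is `f_n^{(b)} = b^{(n)}·F_n`, the product of the rising
factorial `b^{(n)} = b(b+1)⋯(b+n-1)` and the Fibonacci number
`F_n = Fib(n+1)`. -/
theorem factorial_mixed_rule_sequence
    (L M : Module.End ℝ (Polynomial ℝ))
    (hL : ∀ k : ℕ, 1 ≤ k → L (X ^ k) = (k : ℝ) • X ^ (k + 1))
    (hM : ∀ k : ℕ, 1 ≤ k → M (X ^ k) = ((k * (k + 1) : ℕ) : ℝ) • X ^ (k + 2))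
    (b : ℕ) (hb : 1 ≤ b) (p : ℕ → Polynomial ℝ)
    (hp0 : p 0 = X ^ b) (hp1 : p 1 = L (p 0))
    (hrec : ∀ n, p (n + 2) = L (p (n + 1)) + M (p n)) (n : ℕ) :
    (p n).eval 1 =
      (((∏ i ∈ Finset.range n, (b + i)) * Nat.fib (n + 1) : ℕ) : ℝ) := by
  rw [level_eq_mixedRuleCoeff_smul hL hM hb hp0 hp1 hrec n]
  simp [mixedRuleCoeff]
end
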